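/- arXiv:cs/0608066 — 3 statements merged into one kernel-verified Lean document; each statement's English description precedes it below -/
import Mathlib

section
/- Let k be a positive integer and let H_m be the final subgraph produced by the online certificate process on G. If G is k-connected, then H_m is k-connected. -/
/-- A graph `H` on at least `k+1` vertices is `k`-connected if deleting any set of at most
`k-1` vertices leaves a connected graph. -/
def IsKConnected {V : Type*} [Fintype V] (k : ℕ) (H : SimpleGraph V) : Prop :=
  k + 1 ≤ Fintype.card V ∧
    ∀ S : Finset V, S.card ≤ k - 1 → (H.induce ((↑S : Set V)ᶜ)).Connected

/-- `H` contains `k` pairwise internally vertex-disjoint paths between `u` and `v`. -/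
def InternallyDisjointPaths {V : Type*} (H : SimpleGraph V) (k : ℕ) (u v : V) : Prop :=
  ∃ p : Fin k → H.Walk u v, (∀ i, (p i).IsPath) ∧
    ∀ i j, i ≠ j → ∀ x, x ∈ (p i).support → x ∈ (p j).support → x = u ∨ x = v

-- The online certificate process: starting from the empty graph `H_0 = ⊥`, the `i`-th input
-- edge `(e i).1 (e i).2` is added iff the current subgraph does not already contain `k`
-- pairwise internally vertex-disjoint paths between its endpoints.
open Classical in
noncomputable def certProcess {V : Type*} (k : ℕ) (e : ℕ → V × V) : ℕ → SimpleGraph V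
  | 0 => ⊥
  | (i + 1) =>
      if InternallyDisjointPaths (certProcess k e i) k (e i).1 (e i).2 then
        certProcess k e i
      else
        certProcess k e i ⊔ SimpleGraph.fromEdgeSet {s((e i).1, (e i).2)}

lemma certProcess_mono {V : Type*} (k : ℕ) (e : ℕ → V × V) {i j : ℕ} (h : i ≤ j) :
    certProcess k e i ≤ certProcess k e j := by
  induction j with
  | zero => simp [Nat.le_zero.mp h]
  | succ j ih =>
    rcases Nat.lt_or_ge i (j+1) with h' | h'
    · refine le_trans (ih (Nat.lt_succ_iff.mp h')) ?_
      rw [certProcess]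
      split
      · exact le_refl _
      · exact le_sup_left
    · have : i = j + 1 := le_antisymm h h'
      subst this; exact le_refl _

lemma certProcess_le {V : Type*} (G : SimpleGraph V) (k m : ℕ) (e : ℕ → V × V)
    (hadj : ∀ i < m, G.Adj (e i).1 (e i).2) :
    certProcess k e m ≤ G := by
  induction m with
  | zero => simp [certProcess]
  | succ m ih =>
    rw [certProcess]
    have h1 : certProcess k e m ≤ G := ih (fun i hi => hadj i (Nat.lt_succ_of_lt hi))
    split
    · exact h1
    · refine sup_le h1 ?_
      intro a b hab
      rw [SimpleGraph.fromEdgeSet_adj] at hab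
      obtain ⟨hs, _⟩ := hab
      simp only [Set.mem_singleton_iff, Sym2.eq, Sym2.rel_iff', Prod.mk.injEq, Prod.swap_prod_mk] at hs
      have := hadj m (Nat.lt_succ_self m)
      rcases hs with ⟨rfl, rfl⟩ | ⟨rfl, rfl⟩
      · exact this
      · exact this.symm

lemma reach_induce {V : Type*} {H H' : SimpleGraph V} {T : Set V} {u v : V} (hle : H' ≤ H)
    (w : H'.Walk u v) (hw : ∀ x ∈ w.support, x ∈ T) :
    (H.induce T).Reachable ⟨u, hw u w.start_mem_support⟩ ⟨v, hw v w.end_mem_support⟩ := by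
  induction w with
  | nil => rfl
  | @cons a b c h w ih =>
    refine SimpleGraph.Reachable.trans ?_
      (ih (fun x hx => hw x (by rw [SimpleGraph.Walk.support_cons]; exact List.mem_cons_of_mem _ hx)))
    exact SimpleGraph.Adj.reachable (by exact hle h)

lemma key_step {V : Type*} (G : SimpleGraph V) (k m : ℕ) (e : ℕ → V × V)
    (hcov : ∀ a b, G.Adj a b → ∃ i < m, s((e i).1, (e i).2) = s(a, b))
    {x y : V} (hxy : G.Adj x y) :
    (certProcess k e m).Adj x y ∨
      ∃ i < m, InternallyDisjointPaths (certProcess k e i) k x y ∨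
        InternallyDisjointPaths (certProcess k e i) k y x := by
  obtain ⟨i, him, hs⟩ := hcov x y hxy
  simp only [Sym2.eq, Sym2.rel_iff', Prod.mk.injEq, Prod.swap_prod_mk] at hs
  by_cases hP : InternallyDisjointPaths (certProcess k e i) k (e i).1 (e i).2
  · right
    refine ⟨i, him, ?_⟩
    rcases hs with ⟨h1, h2⟩ | ⟨h1, h2⟩
    · left; rw [← h1, ← h2]; exact hP
    · right; rw [← h1, ← h2]; exact hP
  · left
    have hadj1 : (certProcess k e (i+1)).Adj (e i).1 (e i).2 := by
      rw [certProcess]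
      rw [if_neg hP]
      refine SimpleGraph.sup_adj _ _ _ _ |>.mpr (Or.inr ?_)
      rw [SimpleGraph.fromEdgeSet_adj]
      constructor
      · exact Set.mem_singleton _
      · rcases hs with ⟨h1, h2⟩ | ⟨h1, h2⟩
        · rw [h1, h2]; exact hxy.ne
        · rw [h1, h2]; exact hxy.ne'
    have hle := certProcess_mono k e (Nat.succ_le_of_lt him)
    have := hle hadj1
    rcases hs with ⟨h1, h2⟩ | ⟨h1, h2⟩
    · rwa [h1, h2] at this
    · rw [h1, h2] at this; exact this.symm

lemma good_path {V : Type*} {H : SimpleGraph V} {k : ℕ} {x y : V} (hk : 0 < k)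
    (S : Finset V) (hS : S.card ≤ k - 1) (hx : x ∉ S) (hy : y ∉ S)
    (hP : InternallyDisjointPaths H k x y) :
    ∃ w : H.Walk x y, ∀ z ∈ w.support, z ∉ S := by
  obtain ⟨p, _, hdisj⟩ := hP
  by_contra hcon
  push_neg at hcon
  choose f hf1 hf2 using fun i => hcon (p i)
  have hfS : ∀ i, f i ∈ S := fun i => (hf2 i)
  have hinj : Function.Injective f := by
    intro i j hij
    by_contra hne
    rcases hdisj i j hne (f i) (hf1 i) (hij ▸ hf1 j) with h | h
    · exact hx (h ▸ hfS i)
    · exact hy (h ▸ hfS i)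
  have : k ≤ S.card := by
    have := Finset.card_le_card_of_injOn (s := Finset.univ) (t := S) f (fun i _ => hfS i) (hinj.injOn)
    simpa using this
  omega

private theorem certProcess_aux {V : Type*} [Fintype V] (G : SimpleGraph V)
    (k m : ℕ) (hk : 0 < k)
    (e : ℕ → V × V)
    (hadj : ∀ i < m, G.Adj (e i).1 (e i).2)
    (hcov : ∀ a b, G.Adj a b → ∃ i < m, s((e i).1, (e i).2) = s(a, b))
    (hG : (k + 1 ≤ Fintype.card V ∧
      ∀ S : Finset V, S.card ≤ k - 1 → (G.induce ((↑S : Set V)ᶜ)).Connected)) :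
    (k + 1 ≤ Fintype.card V ∧
      ∀ S : Finset V, S.card ≤ k - 1 → ((certProcess k e m).induce ((↑S : Set V)ᶜ)).Connected) := by
  obtain ⟨hcard, hconn⟩ := hG
  refine ⟨hcard, fun S hS => ?_⟩
  have hGconn := hconn S hS
  rw [SimpleGraph.connected_iff] at hGconn ⊢
  refine ⟨?_, hGconn.2⟩
  -- preconnected
  intro a b
  obtain ⟨w⟩ := hGconn.1 a b
  induction w with
  | nil => rfl
  | @cons a c b h w ih =>
    refine SimpleGraph.Reachable.trans ?_ ih
    -- h : (G.induce Sᶜ).Adj a c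
    have hG' : G.Adj ↑a ↑c := h
    have ha : (↑a : V) ∉ S := a.2
    have hc : (↑c : V) ∉ S := c.2
    rcases key_step G k m e hcov hG' with hadj' | ⟨i, him, hP⟩
    · exact SimpleGraph.Adj.reachable (by exact hadj')
    · have hle := certProcess_mono k e (le_of_lt him)
      rcases hP with hP | hP
      · obtain ⟨w', hw'⟩ := good_path hk S hS ha hc hP
        exact reach_induce hle w' (fun z hz => hw' z hz)
      · obtain ⟨w', hw'⟩ := good_path hk S hS hc ha hP
        exact (reach_induce hle w' (fun z hz => hw' z hz)).symm


/-- If `G` is `k`-connected, then the final subgraph `H_m` produced by the online certificate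
process on `G` is `k`-connected. -/
theorem certProcess_kConnected_of_kConnected {V : Type*} [Fintype V] (G : SimpleGraph V)
    (k m : ℕ) (hk : 0 < k)
    (e : ℕ → V × V)
    (hadj : ∀ i < m, G.Adj (e i).1 (e i).2)
    (hinj : ∀ i < m, ∀ j < m, s((e i).1, (e i).2) = s((e j).1, (e j).2) → i = j)
    (hcov : ∀ a b, G.Adj a b → ∃ i < m, s((e i).1, (e i).2) = s(a, b))
    (hG : IsKConnected k G) :
    IsKConnected k (certProcess k e m) :=
  certProcess_aux G k m hk e hadj hcov hG
end

section
/- Let k be a positive integer and let H be a spanning subgraph of G (same vertex set V, with E(H) ⊆ E(G)) such that for every edge uv of G not belonging to H there exist k pairwise internally vertex-disjoint paths between u and v in H. Then H is k-connected if and only if G is k-connected. -/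
lemma reach_of_adj_reach {W : Type*} (G₁ G₂ : SimpleGraph W)
    (h : ∀ a b, G₁.Adj a b → G₂.Reachable a b) {a b : W} (hr : G₁.Reachable a b) :
    G₂.Reachable a b := by
  obtain ⟨p⟩ := hr
  induction p with
  | nil => exact SimpleGraph.Reachable.refl _
  | cons h' q ih => exact (h _ _ h').trans ih

lemma reach_induce_s4 {V : Type*} (H : SimpleGraph V) (s : Set V) {u v : V} (p : H.Walk u v)
    (hp : ∀ x ∈ p.support, x ∈ s) (hu : u ∈ s) (hv : v ∈ s) :
    (H.induce s).Reachable ⟨u, hu⟩ ⟨v, hv⟩ := by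
  induction p with
  | nil => exact SimpleGraph.Reachable.refl _
  | @cons a c d h' q ih =>
    have hc : c ∈ s := hp c (by simp)
    have h1 : (H.induce s).Adj ⟨a, hu⟩ ⟨c, hc⟩ := h'
    exact (h1.reachable).trans (ih (fun x hx => hp x (by simp [hx])) hc hv)





/-- If `H` is a spanning subgraph of `G` such that for every edge `uv` of `G` not in `H`
there are `k` pairwise internally vertex-disjoint paths between `u` and `v` in `H`, then `H`
is `k`-connected iff `G` is `k`-connected. -/
theorem kConnected_iff_of_disjoint_paths {V : Type*} [Fintype V] (G H : SimpleGraph V)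
    (k : ℕ) (hk : 0 < k) (hHG : H ≤ G)
    (hpaths : ∀ u v : V, G.Adj u v → ¬ H.Adj u v → InternallyDisjointPaths H k u v) :
    IsKConnected k H ↔ IsKConnected k G := by
  constructor
  · rintro ⟨hcard, hconn⟩
    refine ⟨hcard, fun S hS => ?_⟩
    exact (hconn S hS).mono (fun a b hab => hHG hab)
  · rintro ⟨hcard, hconn⟩
    refine ⟨hcard, fun S hS => ?_⟩
    have hG := hconn S hS
    haveI := hG.nonempty
    refine ⟨fun a b => ?_⟩
    refine reach_of_adj_reach _ _ (fun x y hxy => ?_) (hG.preconnected a b)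
    obtain ⟨u, hu⟩ := x
    obtain ⟨v, hv⟩ := y
    have hadj : G.Adj u v := hxy
    by_cases hH : H.Adj u v
    · exact SimpleGraph.Adj.reachable hH
    · obtain ⟨p, hpath, hdisj⟩ := hpaths u v hadj hH
      have hex : ∃ i, ∀ x ∈ (p i).support, x ∉ (S : Set V) := by
        by_contra hcon
        push_neg at hcon
        choose f hf1 hf2 using hcon
        have hinj : Function.Injective f := by
          intro i j hij
          by_contra hne
          rcases hdisj i j hne (f i) (hf1 i) (hij ▸ hf1 j) with h | h
          · exact hu (h ▸ hf2 i)
          · exact hv (h ▸ hf2 i)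
        have hginj : Function.Injective (fun i : Fin k => (⟨f i, hf2 i⟩ : {x // x ∈ S})) := by
          intro i j hij
          exact hinj (congrArg Subtype.val hij)
        have hle : Fintype.card (Fin k) ≤ Fintype.card {x // x ∈ S} :=
          Fintype.card_le_of_injective _ hginj
        simp [Fintype.card_coe] at hle
        omega
      obtain ⟨i, hi⟩ := hex
      exact reach_induce_s4 H _ (p i) (fun x hx => hi x hx) hu hv
end

section
/- With G_0 = G and, for i = 1, …, k, o_i a scan order of G_{i−1} and F_i the earliest-neighbor forest of G_{i−1} with respect to o_i, the graph on V with edge set F_1 ∪ … ∪ F_k is k-connected if and only if G is k-connected. -/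
/-- `o` is a scan order of `H`: an injective labelling such that every vertex that is not the
`o`-minimal vertex of its connected component of `H` has a neighbor with a smaller label. -/
def IsScanOrder {V : Type*} (H : SimpleGraph V) (o : V → ℕ) : Prop :=
  Function.Injective o ∧
    ∀ v w, H.Reachable v w → o w < o v → ∃ x, H.Adj v x ∧ o x < o v

/-- The earliest-neighbor (scan-first search) forest of `H` with respect to `o`: for every
vertex `v` that is not the `o`-minimal vertex of its connected component of `H`, the edge
joining `v` to its neighbor `u` with `o u` minimal among all neighbors of `v`. -/
def earliestForest {V : Type*} (H : SimpleGraph V) (o : V → ℕ) : Set (Sym2 V) :=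
  {e | ∃ v u, e = s(u, v) ∧ H.Adj v u ∧ (∃ w, H.Reachable v w ∧ o w < o v) ∧
    ∀ x, H.Adj v x → o u ≤ o x}

/-- `Gseq G F i` is the graph `G_i` on `V` with edge set `E(G) \ (F 0 ∪ ⋯ ∪ F (i-1))`. -/
def Gseq {V : Type*} (G : SimpleGraph V) (F : ℕ → Set (Sym2 V)) (i : ℕ) : SimpleGraph V :=
  SimpleGraph.fromEdgeSet (G.edgeSet \ ⋃ j ∈ Finset.range i, F j)

open SimpleGraph Finset

namespace SimpleGraph

variable {V : Type*}

/-- `H` with every edge at `S` removed; unlike `H.induce Sᶜ` it keeps the vertex type `V`, so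
graphs with different deleted sets can be compared. -/
def isolate (H : SimpleGraph V) (S : Set V) : SimpleGraph V where
  Adj x y := H.Adj x y ∧ x ∉ S ∧ y ∉ S
  symm := ⟨fun _ _ h => ⟨h.1.symm, h.2.2, h.2.1⟩⟩
  loopless := ⟨fun x h => H.loopless.irrefl x h.1⟩

lemma Reachable.induce_compl_of_isolate {H : SimpleGraph V} {S : Set V} {u v : V}
    (h : (H.isolate S).Reachable u v) (hu : u ∉ S) (hv : v ∉ S) :
    (H.induce Sᶜ).Reachable ⟨u, hu⟩ ⟨v, hv⟩ := by
  rw [reachable_iff_reflTransGen] at h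
  induction h with
  | refl => rfl
  | tail _ hbc ih => exact (ih hbc.2.1).trans (Adj.reachable (by exact hbc.1))

lemma Reachable.of_forall_adj {G H : SimpleGraph V} (hGH : ∀ u v, G.Adj u v → H.Reachable u v)
    {u v : V} (h : G.Reachable u v) : H.Reachable u v := by
  rw [reachable_iff_reflTransGen] at h
  induction h with
  | refl => rfl
  | tail _ hbc ih => exact ih.trans (hGH _ _ hbc)

lemma Reachable.of_bypass {A B : SimpleGraph V} (z : V)
    (hA : ∀ x y, A.Adj x y → x ≠ z → y ≠ z → B.Reachable x y)
    (hz : ∀ x y, A.Adj x z → A.Adj y z → B.Reachable x y)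
    {x y : V} (h : A.Reachable x y) (hx : x ≠ z) (hy : y ≠ z) : B.Reachable x y := by
  suffices ∀ w, A.Reachable x w → (w ≠ z → B.Reachable x w) ∧
      (w = z → ∃ a, A.Adj a z ∧ B.Reachable x a) from (this y h).1 hy
  intro w hw
  rw [reachable_iff_reflTransGen] at hw
  induction hw with
  | refl => exact ⟨fun _ => .refl x, fun h => absurd h hx⟩
  | @tail b c _ hbc ih =>
    by_cases hb : b = z
    · subst hb
      obtain ⟨a, haz, hxa⟩ := ih.2 rfl
      exact ⟨fun _ => hxa.trans (hz a c haz hbc.symm),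
        fun hc => absurd (hc ▸ hbc) (A.loopless.irrefl _)⟩
    · exact ⟨fun hc => (ih.1 hb).trans (hA b c hbc hb hc),
        fun hc => ⟨b, hc ▸ hbc, ih.1 hb⟩⟩

end SimpleGraph

section EarliestForest

variable {V : Type*} {H K : SimpleGraph V} {o : V → ℕ} {U : Set V}

lemma adj_of_mem_earliestForest {x y : V} (h : s(x, y) ∈ earliestForest H o) : H.Adj x y := by
  obtain ⟨v, u, he, hadj, -, -⟩ := h
  rcases Sym2.eq_iff.mp he with ⟨rfl, rfl⟩ | ⟨rfl, rfl⟩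
  exacts [hadj.symm, hadj]

lemma IsScanOrder.exists_earliest_neighbor (hscan : IsScanOrder H o) {c w : V}
    (hcw : H.Reachable c w) (hlt : o w < o c) :
    ∃ p, s(p, c) ∈ earliestForest H o ∧ o p < o c ∧ ∀ x, H.Adj c x → o p ≤ o x := by
  obtain ⟨x, hcx, hxc⟩ := hscan.2 c w hcw hlt
  set p := Function.argminOn o (H.neighborSet c) ⟨x, hcx⟩
  have hmin : ∀ y, H.Adj c y → o p ≤ o y := fun y hy => Function.argminOn_le o _ hy
  have hcp : H.Adj c p := Function.argminOn_mem o _ _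
  exact ⟨p, ⟨c, p, rfl, hcp, ⟨w, hcw, hlt⟩, hmin⟩, (hmin x hcx).trans_lt hxc, hmin⟩

lemma IsScanOrder.exists_min_reachable_earliestForest (hscan : IsScanOrder H o)
    (hK : ∀ x y, s(x, y) ∈ earliestForest H o → x ∈ U → y ∈ U → K.Adj x y)
    (c : V) (hc : ∀ w, o w ≤ o c → w ∈ U) :
    ∃ ρ, (∀ w, H.Reachable ρ w → o ρ ≤ o w) ∧ H.Reachable c ρ ∧
      K.Reachable c ρ := by
  induction hn : o c using Nat.strong_induction_on generalizing c with
  | _ n ih =>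
  by_cases hroot : ∀ w, H.Reachable c w → o c ≤ o w
  · exact ⟨c, hroot, .refl c, .refl c⟩
  push Not at hroot
  obtain ⟨w, hcw, hlt⟩ := hroot
  obtain ⟨p, hpF, hpc, -⟩ := hscan.exists_earliest_neighbor hcw hlt
  obtain ⟨ρ, hρ, hpρ, hKpρ⟩ :=
    ih (o p) (hn ▸ hpc) p (fun w hw => hc w (hw.trans hpc.le)) rfl
  have hcp : K.Adj c p :=
    hK c p (Sym2.eq_swap ▸ hpF) (hc c le_rfl) (hc p hpc.le)
  exact ⟨ρ, hρ, (adj_of_mem_earliestForest hpF).symm.reachable.trans hpρ,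
    hcp.reachable.trans hKpρ⟩

lemma IsScanOrder.reachable_of_earliestForest (hscan : IsScanOrder H o)
    (hK : ∀ x y, s(x, y) ∈ earliestForest H o → x ∈ U → y ∈ U → K.Adj x y)
    {a b : V} (hab : H.Reachable a b) (ha : ∀ w, o w ≤ o a → w ∈ U)
    (hb : ∀ w, o w ≤ o b → w ∈ U) : K.Reachable a b := by
  obtain ⟨ρ, hρ, haρ, hKaρ⟩ := hscan.exists_min_reachable_earliestForest hK a ha
  obtain ⟨ρ', hρ', hbρ', hKbρ'⟩ := hscan.exists_min_reachable_earliestForest hK b hb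
  have hρρ' : H.Reachable ρ ρ' := haρ.symm.trans (hab.trans hbρ')
  have : ρ = ρ' := hscan.1 ((hρ ρ' hρρ').antisymm (hρ' ρ hρρ'.symm))
  exact hKaρ.trans (this ▸ hKbρ'.symm)

lemma IsScanOrder.exists_reachable_lt_of_notMem_earliestForest (hscan : IsScanOrder H o)
    (hK : ∀ x y, s(x, y) ∈ earliestForest H o → x ∈ U → y ∈ U → K.Adj x y)
    {a z : V} (haz : H.Adj a z) (hazF : s(a, z) ∉ earliestForest H o) (ha : a ∈ U)
    (hU : ∀ w, o w < o z → w ∈ U) :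
    ∃ p, o p < o z ∧ H.Reachable a p ∧ K.Reachable a p := by
  by_cases hroot : ∀ w, H.Reachable a w → o a ≤ o w
  · refine ⟨a, (hroot z haz.reachable).lt_of_ne fun h => haz.ne (hscan.1 h), .refl a, .refl a⟩
  push Not at hroot
  obtain ⟨w, haw, hlt⟩ := hroot
  obtain ⟨p, hpF, -, hmin⟩ := hscan.exists_earliest_neighbor haw hlt
  have hpz : o p < o z := (hmin z haz).lt_of_ne fun h => by
    rw [hscan.1 h, Sym2.eq_swap] at hpF
    exact hazF hpF
  have hap : K.Adj a p := hK a p (Sym2.eq_swap ▸ hpF) ha (hU p hpz)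
  exact ⟨p, hpz, (adj_of_mem_earliestForest hpF).symm.reachable, hap.reachable⟩

lemma IsScanOrder.reachable_of_adj_notMem_earliestForest (hscan : IsScanOrder H o)
    (hK : ∀ x y, s(x, y) ∈ earliestForest H o → x ∈ U → y ∈ U → K.Adj x y)
    {a b z : V} (haz : H.Adj a z) (hbz : H.Adj b z)
    (hazF : s(a, z) ∉ earliestForest H o) (hbzF : s(b, z) ∉ earliestForest H o)
    (ha : a ∈ U) (hb : b ∈ U) (hU : ∀ w, o w < o z → w ∈ U) : K.Reachable a b := by
  obtain ⟨p, hp, hap, hKap⟩ :=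
    hscan.exists_reachable_lt_of_notMem_earliestForest hK haz hazF ha hU
  obtain ⟨q, hq, hbq, hKbq⟩ :=
    hscan.exists_reachable_lt_of_notMem_earliestForest hK hbz hbzF hb hU
  have hpq : K.Reachable p q :=
    hscan.reachable_of_earliestForest hK (hap.symm.trans (haz.reachable.trans
      (hbz.reachable.symm.trans hbq)))
      (fun w hw => hU w (hw.trans_lt hp)) (fun w hw => hU w (hw.trans_lt hq))
  exact hKap.trans (hpq.trans hKbq.symm)

end EarliestForest

section Gseq

variable {V : Type*} (G : SimpleGraph V) (F : ℕ → Set (Sym2 V))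

lemma Gseq_adj {i : ℕ} {x y : V} :
    (Gseq G F i).Adj x y ↔ G.Adj x y ∧ ∀ j < i, s(x, y) ∉ F j := by
  simp only [Gseq, fromEdgeSet_adj, Set.mem_sdiff, mem_edgeSet, Set.mem_iUnion, mem_range,
    not_exists]
  exact ⟨fun h => ⟨h.1.1, h.1.2⟩, fun h => ⟨h, h.1.ne⟩⟩

lemma Gseq_zero : Gseq G F 0 = G := by
  ext x y
  simp [Gseq_adj]

lemma Gseq_succ_shift (i : ℕ) :
    Gseq (Gseq G F 1) (fun j => F (j + 1)) i = Gseq G F (i + 1) := by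
  ext x y
  simp only [Gseq_adj, Nat.lt_one_iff, forall_eq, Nat.forall_lt_succ_left]
  tauto

end Gseq

section ScanForests

variable {V : Type*} {G : SimpleGraph V} {o : ℕ → V → ℕ} {F : ℕ → Set (Sym2 V)}

def forestUnion (F : ℕ → Set (Sym2 V)) (k : ℕ) : SimpleGraph V :=
  fromEdgeSet (⋃ i ∈ range k, F i)

lemma forestUnion_adj {k : ℕ} {x y : V} :
    (forestUnion F k).Adj x y ↔ (∃ i < k, s(x, y) ∈ F i) ∧ x ≠ y := by
  simp [forestUnion, fromEdgeSet_adj]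

lemma Gseq_adj_of_mem {k i : ℕ} (hF : ∀ i < k, F i = earliestForest (Gseq G F i) (o i))
    (hi : i < k) {x y : V} (h : s(x, y) ∈ F i) : (Gseq G F i).Adj x y :=
  adj_of_mem_earliestForest (hF i hi ▸ h)

lemma forestUnion_le {k : ℕ} (hF : ∀ i < k, F i = earliestForest (Gseq G F i) (o i)) :
    forestUnion F k ≤ G := fun _ _ hxy => by
  obtain ⟨⟨i, hi, he⟩, -⟩ := forestUnion_adj.1 hxy
  exact ((Gseq_adj G F).1 (Gseq_adj_of_mem hF hi he)).1

lemma isolate_forestUnion_adj {k i : ℕ} {S : Set V} {x y : V} (hi : i < k)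
    (he : s(x, y) ∈ F i) (hxy : x ≠ y) (hx : x ∉ S) (hy : y ∉ S) :
    ((forestUnion F k).isolate S).Adj x y :=
  ⟨forestUnion_adj.2 ⟨⟨i, hi, he⟩, hxy⟩, hx, hy⟩

lemma reachable_isolate_forestUnion_of_erase_min [DecidableEq V] {k : ℕ}
    (hscan0 : IsScanOrder G (o 0)) (hF : ∀ i < k + 1, F i = earliestForest (Gseq G F i) (o i))
    {S : Finset V} {z : V} (hz : z ∈ S) (hmin : ∀ w ∈ S, o 0 z ≤ o 0 w) {x y : V}
    (h : ((forestUnion (fun i => F (i + 1)) k).isolate ↑(S.erase z)).Reachable x y)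
    (hx : x ∉ S) (hy : y ∉ S) : ((forestUnion F (k + 1)).isolate S).Reachable x y := by
  have hF0 : F 0 = earliestForest G (o 0) := Gseq_zero G F ▸ hF 0 k.succ_pos
  have hnotS : ∀ w, w ∉ S.erase z → w ≠ z → w ∉ S := fun w hw hwz hwS =>
    hw (mem_erase.2 ⟨hwz, hwS⟩)
  have hGz : ∀ a, ((forestUnion (fun i => F (i + 1)) k).isolate ↑(S.erase z)).Adj a z →
      a ∉ S ∧ G.Adj a z ∧ s(a, z) ∉ earliestForest G (o 0) := by
    rintro a ⟨haz, ha, -⟩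
    obtain ⟨⟨i, hi, he⟩, hne⟩ := forestUnion_adj.1 haz
    obtain ⟨hGaz, hF0az⟩ := (Gseq_adj G F).1 (Gseq_adj_of_mem hF (Nat.succ_lt_succ hi) he)
    exact ⟨hnotS a ha hne, hGaz, hF0 ▸ hF0az 0 i.succ_pos⟩
  refine Reachable.of_bypass z (fun a b hab haz hbz => ?_) (fun a b ha hb => ?_) h
    (fun h => hx (h ▸ hz)) (fun h => hy (h ▸ hz))
  · obtain ⟨⟨⟨i, hi, he⟩, hne⟩, ha, hb⟩ := And.imp_left forestUnion_adj.1 hab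
    exact (isolate_forestUnion_adj (Nat.succ_lt_succ hi) he hne
      (hnotS a ha haz) (hnotS b hb hbz)).reachable
  · obtain ⟨haS, haz, hazF⟩ := hGz a ha
    obtain ⟨hbS, hbz, hbzF⟩ := hGz b hb
    refine hscan0.reachable_of_adj_notMem_earliestForest (U := (↑S)ᶜ) (fun c d hcd hc hd => ?_)
      haz hbz hazF hbzF haS hbS fun w hw hwS => (hmin w hwS).not_gt hw
    exact isolate_forestUnion_adj k.succ_pos (hF0 ▸ hcd) (adj_of_mem_earliestForest hcd).ne hc hd

theorem reachable_isolate_forestUnion_of_adj {k : ℕ}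
    (hscan : ∀ i < k, IsScanOrder (Gseq G F i) (o i))
    (hF : ∀ i < k, F i = earliestForest (Gseq G F i) (o i))
    {S : Finset V} (hS : #S < k) {u v : V} (hu : u ∉ S) (hv : v ∉ S) (huv : G.Adj u v) :
    ((forestUnion F k).isolate S).Reachable u v := by
  classical
  induction k generalizing G o F S u v with
  | zero => omega
  | succ k ih =>
  have hscan0 : IsScanOrder G (o 0) := Gseq_zero G F ▸ hscan 0 k.succ_pos
  rcases S.eq_empty_or_nonempty with rfl | hSne
  · have hF0 : F 0 = earliestForest G (o 0) := Gseq_zero G F ▸ hF 0 k.succ_pos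
    refine hscan0.reachable_of_earliestForest (U := Set.univ) ?_ huv.reachable
      (fun _ _ => trivial) (fun _ _ => trivial)
    intro c d hcd _ _
    exact isolate_forestUnion_adj k.succ_pos (hF0 ▸ hcd) (adj_of_mem_earliestForest hcd).ne
      (notMem_empty c) (notMem_empty d)
  by_cases huvF : s(u, v) ∈ F 0
  · exact (isolate_forestUnion_adj k.succ_pos huvF huv.ne hu hv).reachable
  obtain ⟨z, hz, hmin⟩ := S.exists_min_image (o 0) hSne
  have hshift := Gseq_succ_shift G F
  have hS' : #(S.erase z) < k := by
    rw [card_erase_of_mem hz]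
    have := hSne.card_pos
    omega
  have huv' : (Gseq G F 1).Adj u v :=
    (Gseq_adj G F).2 ⟨huv, fun j hj => by rwa [Nat.lt_one_iff.1 hj]⟩
  refine reachable_isolate_forestUnion_of_erase_min hscan0 hF hz hmin ?_ hu hv
  exact ih (fun i hi => hshift i ▸ hscan (i + 1) (by omega))
    (fun i hi => hshift i ▸ hF (i + 1) (by omega)) hS' (fun h => hu (mem_of_mem_erase h))
    (fun h => hv (mem_of_mem_erase h)) huv'

end ScanForests

/-- With `G_0 = G` and, for `i = 1, …, k`, `o_i` a scan order of `G_(i-1)` and `F_i` the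
earliest-neighbor forest of `G_(i-1)` with respect to `o_i`, the graph with edge set
`F_1 ∪ ⋯ ∪ F_k` is `k`-connected iff `G` is `k`-connected. -/
theorem scanForests_kConnected_iff {V : Type*} [Fintype V] (G : SimpleGraph V)
    (k : ℕ) (hk : 0 < k)
    (o : ℕ → V → ℕ) (F : ℕ → Set (Sym2 V))
    (hscan : ∀ i < k, IsScanOrder (Gseq G F i) (o i))
    (hF : ∀ i < k, F i = earliestForest (Gseq G F i) (o i)) :
    IsKConnected k (SimpleGraph.fromEdgeSet (⋃ i ∈ Finset.range k, F i)) ↔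
      IsKConnected k G := by
  refine ⟨fun ⟨hcard, hconn⟩ => ⟨hcard, fun S hS => ?_⟩,
    fun ⟨hcard, hconn⟩ => ⟨hcard, fun S hS => ?_⟩⟩
  · exact (hconn S hS).mono (comap_monotone _ (forestUnion_le hF))
  have hGS := hconn S hS
  have := hGS.nonempty
  refine ⟨fun a b => (hGS.preconnected a b).of_forall_adj fun x y hxy => ?_⟩
  exact (reachable_isolate_forestUnion_of_adj hscan hF (by omega) x.2 y.2 hxy
    ).induce_compl_of_isolate x.2 y.2
end
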